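/- Fix integers n ≥ 2 and m ≥ 1 with m > n(n−1)/2. Then for EVERY integer tuple λ = (λ_{t,i,j})_{1≤t≤m, 1≤i<j≤n}, the τ₂-presented group G = G(n,m,λ) satisfies: the commutator subgroup G' has infinite index in ⟨C⟩ = ⟨c_1,…,c_m⟩, and G is not regular (Z(G) is not contained in Is(G')). -/

import Mathlib

open scoped commutatorElement

noncomputable def grpRank (G : Type*) [Group G] : ℕ :=
  sInf {k : ℕ | ∃ S : Finset G, S.card = k ∧ Subgroup.closure (S : Set G) = ⊤}

def IsTau2 (G : Type*) [Group G] : Prop :=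
  Group.FG G ∧ (∀ g : G, g ≠ 1 → ¬IsOfFinOrder g) ∧ ∀ g h : G, ⁅g, h⁆ ∈ Subgroup.center G

def prodPow {G : Type*} [Group G] {k : ℕ} (v : Fin k → G) (e : Fin k → ℤ) : G :=
  (List.ofFn fun i => v i ^ e i).prod

def tau2Rels (n m : ℕ) (lam : Fin m → Fin n → Fin n → ℤ) :
    Set (FreeGroup (Fin n ⊕ Fin m)) :=
  {r | (∃ i j : Fin n, i < j ∧
          r = ⁅(FreeGroup.of (Sum.inl i) : FreeGroup (Fin n ⊕ Fin m)),
              FreeGroup.of (Sum.inl j)⁆ *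
              (prodPow (fun t : Fin m => FreeGroup.of (Sum.inr t)) (fun t => lam t i j))⁻¹) ∨
       (∃ (i : Fin n) (t : Fin m), r = ⁅(FreeGroup.of (Sum.inl i) : FreeGroup (Fin n ⊕ Fin m)),
              FreeGroup.of (Sum.inr t)⁆) ∨
       (∃ t s : Fin m, r = ⁅(FreeGroup.of (Sum.inr t) : FreeGroup (Fin n ⊕ Fin m)),
              FreeGroup.of (Sum.inr s)⁆)}

def Tau2Group (n m : ℕ) (lam : Fin m → Fin n → Fin n → ℤ) : Type :=
  PresentedGroup (tau2Rels n m lam)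

instance (n m : ℕ) (lam : Fin m → Fin n → Fin n → ℤ) : Group (Tau2Group n m lam) :=
  inferInstanceAs (Group (PresentedGroup (tau2Rels n m lam)))

def tau2a {n m : ℕ} {lam : Fin m → Fin n → Fin n → ℤ} (i : Fin n) : Tau2Group n m lam :=
  PresentedGroup.of (Sum.inl i)

def tau2c {n m : ℕ} {lam : Fin m → Fin n → Fin n → ℤ} (t : Fin m) : Tau2Group n m lam :=
  PresentedGroup.of (Sum.inr t)

def IsCSmall {G : Type*} [Group G] (g : G) : Prop :=
  ∀ x : G, x ∈ Subgroup.centralizer {g} ↔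
    ∃ (t : ℤ) (z : G), z ∈ Subgroup.center G ∧ x = g ^ t * z

def IsMalcevBasis {G : Type*} [Group G] {n m : ℕ} (a : Fin n → G) (c : Fin m → G) : Prop :=
  (∀ t, c t ∈ Subgroup.center G) ∧
  (commutator G ≤ Subgroup.closure (Set.range c)) ∧
  (∀ g : G, ∃! p : (Fin n → ℤ) × (Fin m → ℤ), g = prodPow a p.1 * prodPow c p.2)

/-- A group is regular if Z(G) ≤ Is(G') = {g : gᵗ ∈ G' for some nonzero integer t}. -/
def IsRegularGroup (G : Type*) [Group G] : Prop :=
  ∀ g ∈ Subgroup.center G, ∃ t : ℤ, t ≠ 0 ∧ g ^ t ∈ commutator G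

/-!
Since `m` exceeds the number `n(n-1)/2` of pairs `i < j`, some nonzero rational vector `v` is
orthogonal to every `(λ_{t,i,j})_t`. Then `a_i ↦ 0`, `c_t ↦ v_t` respects the relations and defines
a homomorphism `G → ℚ`. It kills `G'` but sends the central generator `c_t` with `v_t ≠ 0` to an
element of infinite order, so no nonzero power of `c_t` lies in `G'`: hence `G'` has infinite index
in `⟨C⟩` and `Z(G) ⊄ Is(G')`.
-/

section Abelian

variable {G A : Type*} [Group G] [CommGroup A] (f : G →* A)

theorem isOfFinOrder_map_of_zpow_mem_commutator {g : G} {k : ℤ} (hk : k ≠ 0)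
    (hg : g ^ k ∈ commutator G) : IsOfFinOrder (f g) :=
  isOfFinOrder_iff_zpow_eq_one.mpr
    ⟨k, hk, by rw [← map_zpow]; exact Abelianization.commutator_subset_ker f hg⟩

theorem relIndex_commutator_eq_zero_of_not_isOfFinOrder {H : Subgroup G} {g : G} (hgH : g ∈ H)
    (hg : ¬IsOfFinOrder (f g)) : (commutator G).relIndex H = 0 := by
  by_contra h
  refine hg (isOfFinOrder_map_of_zpow_mem_commutator f (Int.natCast_ne_zero.mpr h) ?_)
  rw [zpow_natCast]
  exact Subgroup.pow_relIndex_mem _ hgH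

theorem not_isRegularGroup_of_not_isOfFinOrder {g : G} (hgZ : g ∈ Subgroup.center G)
    (hg : ¬IsOfFinOrder (f g)) : ¬IsRegularGroup G := fun hreg =>
  let ⟨_, hk, hgk⟩ := hreg g hgZ
  hg (isOfFinOrder_map_of_zpow_mem_commutator f hk hgk)

end Abelian

theorem map_prodPow {G H : Type*} [Group G] [Group H] (φ : G →* H) {k : ℕ} (v : Fin k → G)
    (e : Fin k → ℤ) : φ (prodPow v e) = prodPow (φ ∘ v) e := by
  simp [prodPow, map_list_prod, List.map_ofFn, Function.comp_def]

theorem prodPow_eq_prod {A : Type*} [CommGroup A] {k : ℕ} (v : Fin k → A) (e : Fin k → ℤ) :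
    prodPow v e = ∏ i, v i ^ e i := by
  simp [prodPow, List.prod_ofFn]

theorem Matrix.exists_ne_zero_mulVec_eq_zero_of_card_lt {K ι κ : Type*} [Field K] [Fintype ι]
    [Fintype κ] (M : Matrix ι κ K) (h : Fintype.card ι < Fintype.card κ) :
    ∃ v ≠ 0, M.mulVec v = 0 := by
  obtain ⟨v, hv, hv0⟩ := (Submodule.ne_bot_iff _).mp
    (LinearMap.ker_ne_bot_of_finrank_lt (f := M.mulVecLin) (by simpa using h))
  exact ⟨v, hv0, hv⟩

def Fin.ltPairsEquivSigma (n : ℕ) :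
    {p : Fin n × Fin n // p.1 < p.2} ≃ Σ j : Fin n, Fin j where
  toFun p := ⟨p.1.2, ⟨p.1.1, p.2⟩⟩
  invFun q := ⟨(⟨q.2, q.2.isLt.trans q.1.isLt⟩, q.1), q.2.isLt⟩
  left_inv _ := rfl
  right_inv _ := rfl

theorem Fin.card_ltPairs (n : ℕ) :
    Fintype.card {p : Fin n × Fin n // p.1 < p.2} = n * (n - 1) / 2 := by
  rw [Fintype.card_congr (Fin.ltPairsEquivSigma n), Fintype.card_sigma]
  simp only [Fintype.card_fin]
  rw [Fin.sum_univ_eq_sum_range (fun i => i) n, Finset.sum_range_id]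

theorem exists_ne_zero_forall_sum_mul_eq_zero {n m : ℕ} (hm : n * (n - 1) / 2 < m)
    (lam : Fin m → Fin n → Fin n → ℤ) :
    ∃ v : Fin m → ℚ, v ≠ 0 ∧ ∀ i j, i < j → ∑ t, (lam t i j : ℚ) * v t = 0 := by
  let M : Matrix {p : Fin n × Fin n // p.1 < p.2} (Fin m) ℚ := fun p t => lam t p.1.1 p.1.2
  obtain ⟨v, hv0, hv⟩ := M.exists_ne_zero_mulVec_eq_zero_of_card_lt (by simpa [Fin.card_ltPairs])
  exact ⟨v, hv0, fun i j hij => congrFun hv ⟨(i, j), hij⟩⟩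

namespace Tau2Group

variable {n m : ℕ} {lam : Fin m → Fin n → Fin n → ℤ}

section Lift

variable {A : Type*} [CommGroup A] (x : Fin n → A) (y : Fin m → A)

theorem lift_rels (hy : ∀ i j, i < j → ∏ t, y t ^ lam t i j = 1) :
    ∀ r ∈ tau2Rels n m lam, FreeGroup.lift (Sum.elim x y) r = 1 := by
  have comm_eq_one (a b : A) : ⁅a, b⁆ = 1 :=
    commutatorElement_eq_one_iff_mul_comm.mpr (mul_comm a b)
  rintro r (⟨i, j, hij, rfl⟩ | ⟨i, t, rfl⟩ | ⟨t, s, rfl⟩)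
  · simp [map_commutatorElement, map_prodPow, prodPow_eq_prod, Function.comp_def, comm_eq_one,
      hy i j hij]
  all_goals simp [map_commutatorElement, comm_eq_one]

def lift (hy : ∀ i j, i < j → ∏ t, y t ^ lam t i j = 1) : Tau2Group n m lam →* A :=
  PresentedGroup.toGroup (lift_rels x y hy)

theorem lift_c (hy : ∀ i j, i < j → ∏ t, y t ^ lam t i j = 1) (t : Fin m) :
    lift x y hy (tau2c t) = y t :=
  PresentedGroup.toGroup.of _

end Lift

theorem commute_of_tau2c (j : Fin n ⊕ Fin m) (t : Fin m) :
    Commute (PresentedGroup.of j : Tau2Group n m lam) (tau2c t) := by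
  refine commutatorElement_eq_one_iff_commute.mp ?_
  have hrel : ⁅FreeGroup.of j, FreeGroup.of (Sum.inr t)⁆ ∈ tau2Rels n m lam := by
    obtain i | s := j
    · exact Or.inr (Or.inl ⟨i, t, rfl⟩)
    · exact Or.inr (Or.inr ⟨s, t, rfl⟩)
  have h := PresentedGroup.one_of_mem hrel
  rwa [map_commutatorElement] at h

theorem tau2c_mem_center (t : Fin m) : (tau2c t : Tau2Group n m lam) ∈ Subgroup.center _ :=
  Subgroup.mem_center_iff.mpr fun g => Subgroup.mem_centralizer_singleton_iff.mp <|
    PresentedGroup.generated_by _ _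
      (fun j => Subgroup.mem_centralizer_singleton_iff.mpr (commute_of_tau2c j t).eq) g

end Tau2Group

theorem stmt16_general (n m : ℕ) (hgt : n * (n - 1) / 2 < m)
    (lam : Fin m → Fin n → Fin n → ℤ) :
    (commutator (Tau2Group n m lam)).relIndex
        (Subgroup.closure (Set.range (@tau2c n m lam))) = 0 ∧
    ¬ IsRegularGroup (Tau2Group n m lam) := by
  obtain ⟨v, hv0, hv⟩ := exists_ne_zero_forall_sum_mul_eq_zero hgt lam
  obtain ⟨t, ht⟩ := Function.ne_iff.mp hv0
  have hy : ∀ i j, i < j → ∏ s, Multiplicative.ofAdd (v s) ^ lam s i j = 1 := fun i j hij => by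
    simp [← ofAdd_zsmul, ← ofAdd_sum, hv i j hij]
  set f := Tau2Group.lift (lam := lam) 1 _ hy
  have hft : ¬IsOfFinOrder (f (tau2c t)) := by
    rw [Tau2Group.lift_c, isOfFinOrder_iff_eq_one]
    exact ht
  exact ⟨relIndex_commutator_eq_zero_of_not_isOfFinOrder f (Subgroup.subset_closure ⟨t, rfl⟩) hft,
    not_isRegularGroup_of_not_isOfFinOrder f (Tau2Group.tau2c_mem_center t) hft⟩

/-- Fix n ≥ 2 and m > n(n−1)/2. Then for EVERY tuple λ, in the
τ₂-presented group G = G(n,m,λ), the commutator subgroup G' has infinite index in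
⟨C⟩ = ⟨c₁,…,cₘ⟩ and G is not regular. -/
theorem stmt16 (n m : ℕ) (hn : 2 ≤ n) (hm : 1 ≤ m) (hgt : n * (n - 1) / 2 < m)
    (lam : Fin m → Fin n → Fin n → ℤ) :
    (commutator (Tau2Group n m lam)).relIndex
        (Subgroup.closure (Set.range (@tau2c n m lam))) = 0 ∧
    ¬ IsRegularGroup (Tau2Group n m lam) :=
  stmt16_general n m hgt lam
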